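/- arXiv:2106.13985 — 2 statements merged into one kernel-verified Lean document; each statement's English description precedes it below -/
import Mathlib

section
/- If G = (X,Y;E) is a bipartite graph with maximum degree Δ(G), then χ'_int(G,X) ≤ (Δ(G))²·(Δ(G)+1)/2; that is, G has an X-interval coloring using at most (Δ(G))²(Δ(G)+1)/2 colors. -/
/-!
Rank the neighbours of each `x ∈ X` as `0, …, deg x - 1` and colour the edge `xy` with
`B x + rank_x y` for an offset `B x`. The palette of `x` is then the interval
`[B x, B x + deg x)`, and the colouring is proper at `y ∉ X` as soon as the values
`B x + rank_x y` over the neighbours `x` of `y` are distinct. Offsets are chosen greedily: each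
vertex has at most `deg x * (Δ - 1) ≤ Δ * (Δ - 1)` forbidden offsets, so all colours stay below
`Δ * (Δ - 1) + Δ = Δ² ≤ Δ² * (Δ + 1) / 2`.
-/

/-- `X` is one part of a bipartition of `G`: every edge joins `X` and its complement. -/
def IsBipartition {V : Type*} (G : SimpleGraph V) (X : Set V) : Prop :=
  ∀ v w, G.Adj v w → (v ∈ X ↔ w ∉ X)

/-- A proper edge coloring: distinct edges sharing a vertex get distinct colors. -/
def IsProperEdgeColoring {V : Type*} (G : SimpleGraph V) (c : G.edgeSet → ℕ) : Prop :=
  ∀ e f : G.edgeSet, e ≠ f → (∃ v, v ∈ (e : Sym2 V) ∧ v ∈ (f : Sym2 V)) → c e ≠ c f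

/-- The palette of a vertex: the set of colors on its incident edges. -/
def palette {V : Type*} (G : SimpleGraph V) (c : G.edgeSet → ℕ) (v : V) : Set ℕ :=
  {n | ∃ e : G.edgeSet, v ∈ (e : Sym2 V) ∧ c e = n}

/-- The coloring is interval at `v`: the palette of `v` is a set of consecutive integers. -/
def IntervalAt {V : Type*} (G : SimpleGraph V) (c : G.edgeSet → ℕ) (v : V) : Prop :=
  ∀ a b m : ℕ, a ∈ palette G c v → b ∈ palette G c v → a ≤ m → m ≤ b →
    m ∈ palette G c v

section

open Finset

variable {V : Type*}

section Labels

variable (X : Set V) (ℓ : V → V → ℕ)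

/-- Reads `ℓ` with the endpoint in `X` first; edges not crossing `X` get the junk value `0`. -/
noncomputable def orientedLabel : Sym2 V → ℕ :=
  open Classical in
  Sym2.lift ⟨fun u v => if u ∈ X ∧ v ∉ X then ℓ u v else if v ∈ X ∧ u ∉ X then ℓ v u else 0,
    fun u v => by dsimp only; split_ifs <;> tauto⟩

variable {X} in
theorem orientedLabel_mk {x y : V} (hx : x ∈ X) (hy : y ∉ X) :
    orientedLabel X ℓ s(x, y) = ℓ x y := by
  simp [orientedLabel, hx, hy]

end Labels

theorem IsBipartition.exists_mk_eq {G : SimpleGraph V} {X : Set V} (h : IsBipartition G X)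
    (e : G.edgeSet) : ∃ x y, x ∈ X ∧ G.Adj x y ∧ (e : Sym2 V) = s(x, y) := by
  rcases e with ⟨e, he⟩
  induction e using Sym2.ind with
  | _ u v =>
    by_cases hu : u ∈ X
    · exact ⟨u, v, hu, he, rfl⟩
    · exact ⟨v, u, by simpa [hu] using h u v he, G.adj_symm he, Sym2.eq_swap⟩

theorem Set.encard_Iio_nat (n : ℕ) : (Set.Iio n).encard = n := by
  rw [← Finset.coe_range, Set.encard_coe_eq_coe_finsetCard, Finset.card_range]

theorem Nat.mul_pred_add_self_le {n : ℕ} (hn : 1 ≤ n) :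
    n * (n - 1) + n ≤ n ^ 2 * (n + 1) / 2 := by
  obtain ⟨k, rfl⟩ := Nat.exists_eq_add_of_le' hn
  rw [Nat.le_div_iff_mul_le two_pos, Nat.add_sub_cancel]
  nlinarith

namespace SimpleGraph

variable (G : SimpleGraph V)

theorem exists_eq_mk_of_mem_edge {e : G.edgeSet} {v : V} (hv : v ∈ (e : Sym2 V)) :
    ∃ w, G.Adj v w ∧ (e : Sym2 V) = s(v, w) := by
  obtain ⟨w, hw⟩ := Sym2.mem_iff_exists.1 hv
  exact ⟨w, G.mem_edgeSet.1 (hw ▸ e.2), hw⟩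

theorem palette_comp_val (c : Sym2 V → ℕ) (v : V) :
    palette G (fun e => c e) v = (fun w => c s(v, w)) '' G.neighborSet v := by
  ext n
  constructor
  · rintro ⟨e, hv, rfl⟩
    obtain ⟨w, hvw, he⟩ := G.exists_eq_mk_of_mem_edge hv
    exact ⟨w, hvw, by dsimp only; rw [he]⟩
  · rintro ⟨w, hvw, rfl⟩
    exact ⟨⟨s(v, w), hvw⟩, Sym2.mem_mk_left v w, rfl⟩

theorem isProperEdgeColoring_comp_val {c : Sym2 V → ℕ}
    (hc : ∀ v, Set.InjOn (fun w => c s(v, w)) (G.neighborSet v)) :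
    IsProperEdgeColoring G (fun e => c e) := by
  rintro e f hne ⟨v, hve, hvf⟩ hcol
  obtain ⟨w, hvw, he⟩ := G.exists_eq_mk_of_mem_edge hve
  obtain ⟨w', hvw', hf⟩ := G.exists_eq_mk_of_mem_edge hvf
  have hww' : w = w' := hc v hvw hvw' (by simpa only [he, hf] using hcol)
  exact hne (Subtype.ext (by rw [he, hf, hww']))

theorem intervalAt_comp_val_of_bijOn {c : Sym2 V → ℕ} {v : V} {r : V → ℕ} {b d : ℕ}
    (hr : Set.BijOn r (G.neighborSet v) (Set.Iio d))
    (hc : ∀ w ∈ G.neighborSet v, c s(v, w) = b + r w) :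
    IntervalAt G (fun e => c e) v := by
  have hconn : (palette G (fun e => c e) v).OrdConnected := by
    rw [palette_comp_val, Set.image_congr hc, ← Set.image_image (b + ·) r, hr.image_eq,
      ← Set.Ico_bot, Set.image_const_add_Ico]
    exact Set.ordConnected_Ico
  exact fun _ _ _ ha hb ham hmb => hconn.out ha hb ⟨ham, hmb⟩

variable [Fintype V] [DecidableRel G.Adj]

theorem exists_neighbor_ranking :
    ∃ r : V → V → ℕ, ∀ x, Set.BijOn (r x) (G.neighborSet x) (Set.Iio (G.degree x)) := by
  have h : ∀ x, ∃ f : V → ℕ, Set.BijOn f (G.neighborSet x) (Set.Iio (G.degree x)) := by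
    intro x
    refine (G.neighborSet x).toFinite.exists_bijOn_of_encard_eq ?_
    rw [Set.encard_Iio_nat, ← card_neighborFinset_eq_degree, ← Set.encard_coe_eq_coe_finsetCard,
      coe_neighborFinset]
  choose r hr using h
  exact ⟨r, hr⟩

variable [DecidableEq V]

/-- The offsets `b` for `a` under which some edge `ya` would get the same colour
`b + r a y` as another edge `yx` coloured `B x + r x y`. -/
def offsetConflicts (r : V → V → ℕ) (B : V → ℕ) (a : V) : Finset ℕ :=
  (G.neighborFinset a).biUnion fun y =>
    ((G.neighborFinset y).erase a).image fun x => B x + r x y - r a y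

theorem card_offsetConflicts_le (r : V → V → ℕ) (B : V → ℕ) (a : V) :
    #(G.offsetConflicts r B a) ≤ G.maxDegree * (G.maxDegree - 1) :=
  calc #(G.offsetConflicts r B a)
      ≤ ∑ y ∈ G.neighborFinset a, #((G.neighborFinset y).erase a) :=
        card_biUnion_le.trans (sum_le_sum fun _ _ => card_image_le)
    _ ≤ ∑ _y ∈ G.neighborFinset a, (G.maxDegree - 1) := by
        refine sum_le_sum fun y hy => ?_
        rw [card_erase_of_mem (G.mem_neighborFinset y a |>.2 (G.adj_symm (by simpa using hy))),
          card_neighborFinset_eq_degree]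
        exact Nat.sub_le_sub_right (G.degree_le_maxDegree y) 1
    _ ≤ G.maxDegree * (G.maxDegree - 1) := by
        rw [sum_const, smul_eq_mul, card_neighborFinset_eq_degree]
        exact Nat.mul_le_mul_right _ (G.degree_le_maxDegree a)

variable {G} in
theorem add_ne_of_notMem_offsetConflicts {r : V → V → ℕ} {B : V → ℕ} {a x y : V}
    {b : ℕ} (hb : b ∉ G.offsetConflicts r B a) (hya : G.Adj y a) (hyx : G.Adj y x) (hxa : x ≠ a) :
    b + r a y ≠ B x + r x y := by
  refine fun h => hb (mem_biUnion.2 ⟨y, (G.mem_neighborFinset a y).2 hya.symm, mem_image.2 ?_⟩)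
  exact ⟨x, mem_erase.2 ⟨hxa, (G.mem_neighborFinset y x).2 hyx⟩, by omega⟩

theorem exists_offsets_injOn (r : V → V → ℕ) :
    ∃ B : V → ℕ, (∀ x, B x ≤ G.maxDegree * (G.maxDegree - 1)) ∧
      ∀ y, Set.InjOn (fun x => B x + r x y) (G.neighborSet y) := by
  suffices h : ∀ s : Finset V, ∃ B : V → ℕ, (∀ x, B x ≤ G.maxDegree * (G.maxDegree - 1)) ∧
      ∀ y, Set.InjOn (fun x => B x + r x y) (G.neighborSet y ∩ s) by
    obtain ⟨B, hle, hinj⟩ := h univ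
    exact ⟨B, hle, fun y => by simpa using hinj y⟩
  intro s
  induction s using Finset.induction with
  | empty => exact ⟨0, fun _ => Nat.zero_le _, fun y => by simp⟩
  | @insert a t ha ih =>
    obtain ⟨B, hle, hinj⟩ := ih
    obtain ⟨b, hb, hbB⟩ :=
      exists_mem_notMem_of_card_lt_card (t := range (G.maxDegree * (G.maxDegree - 1) + 1))
        ((G.card_offsetConflicts_le r B a).trans_lt (by simp))
    have hfresh : ∀ y x, x ∈ G.neighborSet y ∩ t → a ∈ G.neighborSet y →
        b + r a y ≠ B x + r x y := fun y x hx hya =>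
      add_ne_of_notMem_offsetConflicts hbB hya hx.1 (ne_of_mem_of_not_mem hx.2 ha)
    refine ⟨Function.update B a b, fun x => ?_, fun y => ?_⟩
    · rcases eq_or_ne x a with rfl | hxa
      · simpa using Nat.lt_succ_iff.1 (mem_range.1 hb)
      · simpa [hxa] using hle x
    rintro x ⟨hyx, hx⟩ x' ⟨hyx', hx'⟩ heq
    simp only [coe_insert, Set.mem_insert_iff, mem_coe] at hx hx'
    rcases hx with rfl | hx <;> rcases hx' with rfl | hx'
    · rfl
    · have hx'a : x' ≠ x := ne_of_mem_of_not_mem hx' ha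
      simp only [Function.update_self, Function.update_of_ne hx'a] at heq
      exact absurd heq (hfresh y x' ⟨hyx', hx'⟩ hyx)
    · have hxa : x ≠ x' := ne_of_mem_of_not_mem hx ha
      simp only [Function.update_self, Function.update_of_ne hxa] at heq
      exact absurd heq.symm (hfresh y x ⟨hyx, hx⟩ hyx')
    · simp only [Function.update_of_ne (ne_of_mem_of_not_mem hx ha),
        Function.update_of_ne (ne_of_mem_of_not_mem hx' ha)] at heq
      exact hinj y ⟨hyx, hx⟩ ⟨hyx', hx'⟩ heq

end SimpleGraph

end

/-- If `G = (X, Y; E)` is a bipartite graph with maximum degree `Δ(G)`, then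
`χ'_int(G, X) ≤ Δ(G)² * (Δ(G) + 1) / 2`: `G` has an `X`-interval coloring using at most
`Δ(G)² * (Δ(G) + 1) / 2` colors. -/
theorem X_interval_coloring_cubic_bound {V : Type*} [Fintype V] [DecidableEq V]
    (G : SimpleGraph V) [DecidableRel G.Adj] (X : Set V)
    (hbip : IsBipartition G X) :
    ∃ c : G.edgeSet → ℕ, IsProperEdgeColoring G c ∧
      (∀ e, c e < G.maxDegree ^ 2 * (G.maxDegree + 1) / 2) ∧
      ∀ x ∈ X, IntervalAt G c x := by
  obtain ⟨r, hr⟩ := G.exists_neighbor_ranking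
  obtain ⟨B, hB, hBinj⟩ := G.exists_offsets_injOn r
  set c := orientedLabel X fun x y => B x + r x y
  have hcX : ∀ x ∈ X, ∀ y ∈ G.neighborSet x, c s(x, y) = B x + r x y := fun x hx y hxy =>
    orientedLabel_mk _ hx ((hbip x y hxy).1 hx)
  have hcY : ∀ y ∉ X, ∀ x ∈ G.neighborSet y, c s(y, x) = B x + r x y := fun y hy x hyx => by
    rw [Sym2.eq_swap]
    exact orientedLabel_mk _ (by simpa [hy] using hbip y x hyx) hy
  refine ⟨fun e => c e, G.isProperEdgeColoring_comp_val fun v => ?_, fun e => ?_,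
    fun x hx => G.intervalAt_comp_val_of_bijOn (hr x) (hcX x hx)⟩
  · by_cases hv : v ∈ X
    · exact ((add_right_injective (B v)).comp_injOn (hr v).injOn).congr
        fun w hw => (hcX v hv w hw).symm
    · exact (hBinj v).congr fun w hw => (hcY v hv w hw).symm
  · obtain ⟨x, y, hx, hxy, he⟩ := hbip.exists_mk_eq e
    have hrank : r x y < G.maxDegree := ((hr x).mapsTo hxy).trans_le (G.degree_le_maxDegree x)
    calc c e = B x + r x y := by rw [he]; exact hcX x hx y hxy
      _ < G.maxDegree * (G.maxDegree - 1) + G.maxDegree := add_lt_add_of_le_of_lt (hB x) hrank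
      _ ≤ G.maxDegree ^ 2 * (G.maxDegree + 1) / 2 := Nat.mul_pred_add_self_le (by omega)
end

section
/- If G = (X,Y;E) is a bipartite graph, then χ'_int(G,X) ≤ Δ(X)·š(G), where Δ(X) is the maximum degree among vertices of X and š(G) is the palette index of G. -/
open Finset

namespace Finset

variable {α : Type*} [LinearOrder α] (Q : Finset α)

lemma card_filter_lt_lt_card {p : α} (hp : p ∈ Q) : #{t ∈ Q | t < p} < #Q :=
  card_lt_card (filter_ssubset.2 ⟨p, hp, lt_irrefl p⟩)

lemma strictMonoOn_card_filter_lt : StrictMonoOn (fun p => #{t ∈ Q | t < p}) Q := by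
  intro a ha b _ hab
  refine card_lt_card ((ssubset_iff_of_subset ?_).2 ⟨a, mem_filter.2 ⟨ha, hab⟩, by simp⟩)
  exact monotone_filter_right Q fun _ _ h => h.trans hab

lemma image_card_filter_lt : Q.image (fun p => #{t ∈ Q | t < p}) = range #Q :=
  eq_of_subset_of_card_le
    (image_subset_iff.2 fun p hp => mem_range.2 (card_filter_lt_lt_card Q hp))
    (by rw [card_range, card_image_of_injOn (strictMonoOn_card_filter_lt Q).injOn])

end Finset

lemma Nat.eq_and_eq_of_mul_add_eq_mul_add {Δ a b r r' : ℕ} (hr : r < Δ) (hr' : r' < Δ)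
    (h : Δ * a + r = Δ * b + r') : a = b ∧ r = r' := by
  have hΔ : 0 < Δ := by omega
  have hdiv := congrArg (· / Δ) h
  have hmod := congrArg (· % Δ) h
  simp only [Nat.mul_add_div hΔ, Nat.div_eq_of_lt hr, Nat.div_eq_of_lt hr', Nat.mul_add_mod,
    Nat.mod_eq_of_lt hr, Nat.mod_eq_of_lt hr'] at hdiv hmod
  omega

lemma exists_index_lt_ncard_range {V β : Type*} [Finite V] (f : V → β) :
    ∃ ℓ : V → ℕ, (∀ v, ℓ v < (Set.range f).ncard) ∧ ∀ u v, ℓ u = ℓ v → f u = f v := by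
  let enum := Finite.equivFin (Set.range f)
  refine ⟨fun v => enum ⟨f v, v, rfl⟩, fun v => ?_, fun u v huv => ?_⟩
  · exact (enum _).isLt.trans_eq (Nat.card_coe_set_eq _)
  · exact congrArg Subtype.val (enum.injective (Fin.ext huv))

lemma IsBipartition.existsUnique_mem_edge {V : Type*} {G : SimpleGraph V} {X : Set V}
    (hbip : IsBipartition G X) (e : G.edgeSet) : ∃! x, x ∈ (e : Sym2 V) ∧ x ∈ X := by
  obtain ⟨e, he⟩ := e
  induction e using Sym2.ind with
  | _ a b =>
    have hab := hbip a b he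
    by_cases ha : a ∈ X
    · exact ⟨a, by simp [ha], by aesop⟩
    · exact ⟨b, by simpa [hab] using ha, by aesop⟩

section BlockColoring

variable {V : Type*} [Fintype V] [DecidableEq V] {G : SimpleGraph V} [DecidableRel G.Adj]
  (φ : G.edgeSet → ℕ)

def paletteFinset (v : V) : Finset ℕ :=
  (G.incidenceFinset v).attach.image fun e : G.incidenceFinset v =>
    φ ⟨e, G.incidenceSet_subset v ((G.mem_incidenceFinset v _).1 e.2)⟩

lemma mem_paletteFinset {v : V} {n : ℕ} :
    n ∈ paletteFinset φ v ↔ ∃ e : G.edgeSet, v ∈ (e : Sym2 V) ∧ φ e = n := by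
  simp only [paletteFinset, mem_image, mem_attach, true_and, Subtype.exists,
    SimpleGraph.mem_incidenceFinset]
  exact ⟨fun ⟨a, ⟨ha, hv⟩, h⟩ => ⟨a, ha, hv, h⟩, fun ⟨a, ha, hv, h⟩ => ⟨a, ⟨ha, hv⟩, h⟩⟩

lemma coe_paletteFinset (v : V) : (paletteFinset φ v : Set ℕ) = palette G φ v :=
  Set.ext fun _ => mem_paletteFinset φ

lemma card_paletteFinset_le_degree (v : V) : #(paletteFinset φ v) ≤ G.degree v :=
  card_image_le.trans (by rw [card_attach, G.card_incidenceFinset_eq_degree])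

variable (ℓ : V → ℕ) (Δ : ℕ) (π : G.edgeSet → V)

/-- In the application `ℓ` numbers the palettes of `φ` and `π e` is the endpoint of `e` in `X`. -/
def blockColoring (e : G.edgeSet) : ℕ :=
  Δ * ℓ (π e) + #{t ∈ paletteFinset φ (π e) | t < φ e}

variable {φ ℓ Δ π}

lemma card_filter_lt_paletteFinset_lt (hπ : ∀ e : G.edgeSet, π e ∈ (e : Sym2 V))
    (hΔ : ∀ e, #(paletteFinset φ (π e)) ≤ Δ) (e : G.edgeSet) :
    #{t ∈ paletteFinset φ (π e) | t < φ e} < Δ :=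
  (card_filter_lt_lt_card _ ((mem_paletteFinset φ).2 ⟨e, hπ e, rfl⟩)).trans_le (hΔ e)

lemma blockColoring_lt (hπ : ∀ e : G.edgeSet, π e ∈ (e : Sym2 V))
    (hΔ : ∀ e, #(paletteFinset φ (π e)) ≤ Δ) {n : ℕ} (hℓ : ∀ v, ℓ v < n) (e : G.edgeSet) :
    blockColoring φ ℓ Δ π e < Δ * n :=
  calc blockColoring φ ℓ Δ π e < Δ * ℓ (π e) + Δ :=
        Nat.add_lt_add_left (card_filter_lt_paletteFinset_lt hπ hΔ e) _
    _ = Δ * (ℓ (π e) + 1) := by ring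
    _ ≤ Δ * n := Nat.mul_le_mul_left _ (hℓ _)

lemma isProperEdgeColoring_blockColoring (hφ : IsProperEdgeColoring G φ)
    (hπ : ∀ e : G.edgeSet, π e ∈ (e : Sym2 V)) (hΔ : ∀ e, #(paletteFinset φ (π e)) ≤ Δ)
    (hℓ : ∀ u v, ℓ u = ℓ v → palette G φ u = palette G φ v) :
    IsProperEdgeColoring G (blockColoring φ ℓ Δ π) := by
  intro e f hne hshare hc
  obtain ⟨hℓef, hrank⟩ := Nat.eq_and_eq_of_mul_add_eq_mul_add
    (card_filter_lt_paletteFinset_lt hπ hΔ e) (card_filter_lt_paletteFinset_lt hπ hΔ f) hc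
  have hQ : paletteFinset φ (π e) = paletteFinset φ (π f) :=
    coe_injective (by rw [coe_paletteFinset, coe_paletteFinset, hℓ _ _ hℓef])
  rw [hQ] at hrank
  refine hφ e f hne hshare ((strictMonoOn_card_filter_lt _).injOn ?_ ?_ hrank)
  · exact hQ ▸ (mem_paletteFinset φ).2 ⟨e, hπ e, rfl⟩
  · exact (mem_paletteFinset φ).2 ⟨f, hπ f, rfl⟩

lemma palette_blockColoring {x : V} (hx : ∀ e : G.edgeSet, x ∈ (e : Sym2 V) → π e = x) :
    palette G (blockColoring φ ℓ Δ π) x =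
      Set.Ico (Δ * ℓ x) (Δ * ℓ x + #(paletteFinset φ x)) := by
  have : palette G (blockColoring φ ℓ Δ π) x =
      (Δ * ℓ x + ·) '' ((fun p => #{t ∈ paletteFinset φ x | t < p}) '' palette G φ x) := by
    ext n
    simp only [palette, Set.mem_image, Set.mem_ofPred_eq]
    constructor
    · rintro ⟨e, hxe, rfl⟩
      exact ⟨_, ⟨_, ⟨e, hxe, rfl⟩, rfl⟩, by rw [blockColoring, hx e hxe]⟩
    · rintro ⟨_, ⟨_, ⟨e, hxe, rfl⟩, rfl⟩, rfl⟩
      exact ⟨e, hxe, by rw [blockColoring, hx e hxe]⟩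
  rw [this, ← coe_paletteFinset, ← coe_image, image_card_filter_lt, ← coe_image, range_eq_Ico,
    image_add_left_Ico, add_zero, coe_Ico]

end BlockColoring

lemma intervalAt_iff_ordConnected {V : Type*} {G : SimpleGraph V} {c : G.edgeSet → ℕ} {v : V} :
    IntervalAt G c v ↔ (palette G c v).OrdConnected :=
  ⟨fun h => ⟨fun _ ha _ hb _ hm => h _ _ _ ha hb hm.1 hm.2⟩,
    fun h _ _ _ ha hb ham hmb => h.out ha hb ⟨ham, hmb⟩⟩

/-- If `G = (X, Y; E)` is a bipartite graph, then `χ'_int(G, X) ≤ Δ(X) * š(G)`: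
whenever `ΔX` bounds the degrees of all vertices of `X` and `G` admits a proper edge
coloring `φ` whose number of distinct palettes `φ(v)`, over all vertices `v`, is at most
`s` (so in particular for `ΔX = Δ(X)` and `s = š(G)`, the palette index of `G`), the
graph `G` has an `X`-interval coloring using at most `ΔX * s` colors. -/
theorem X_interval_coloring_palette_index_bound {V : Type*} [Fintype V] [DecidableEq V]
    (G : SimpleGraph V) [DecidableRel G.Adj] (X : Set V) (ΔX s : ℕ)
    (hbip : IsBipartition G X)
    (hΔX : ∀ x ∈ X, G.degree x ≤ ΔX)
    (hs : ∃ φ : G.edgeSet → ℕ, IsProperEdgeColoring G φ ∧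
      ({P : Set ℕ | ∃ v : V, P = palette G φ v}).ncard ≤ s) :
    ∃ c : G.edgeSet → ℕ, IsProperEdgeColoring G c ∧ (∀ e, c e < ΔX * s) ∧
      ∀ x ∈ X, IntervalAt G c x := by
  obtain ⟨φ, hφ, hs⟩ := hs
  obtain ⟨ℓ, hℓs, hℓ⟩ := exists_index_lt_ncard_range (palette G φ)
  have hrange : Set.range (palette G φ) = {P | ∃ v, P = palette G φ v} := by
    simp only [Set.range, eq_comm]
  replace hℓs : ∀ v, ℓ v < s := fun v => (hℓs v).trans_le (hrange ▸ hs)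
  choose π hπ hπX using fun e => (hbip.existsUnique_mem_edge e).exists
  have hπ_eq : ∀ x ∈ X, ∀ e : G.edgeSet, x ∈ (e : Sym2 V) → π e = x := fun x hx e hxe =>
    (hbip.existsUnique_mem_edge e).unique ⟨hπ e, hπX e⟩ ⟨hxe, hx⟩
  have hΔ : ∀ e, #(paletteFinset φ (π e)) ≤ ΔX := fun e =>
    (card_paletteFinset_le_degree φ _).trans (hΔX _ (hπX e))
  refine ⟨blockColoring φ ℓ ΔX π, isProperEdgeColoring_blockColoring hφ hπ hΔ hℓ,
    blockColoring_lt hπ hΔ hℓs, fun x hx => ?_⟩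
  rw [intervalAt_iff_ordConnected, palette_blockColoring (hπ_eq x hx)]
  exact Set.ordConnected_Ico
end
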